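/- arXiv:0906.1716 — 5 statements merged into one kernel-verified Lean document; each statement's English description precedes it below -/
import Mathlib

section
/- Let n ≥ 2, and let α_{ij} ≥ 0 for 1 ≤ i < j ≤ n with ∑_{i=1}^{n-1} α_{in} > 0. Define the Laplacian L(α) = ∑_{1≤i<j≤n} α_{ij} (e_i - e_j)(e_i - e_j)^T on ℝ^n, and define modified weights α'_{ij} = α_{ij} + α_{in}α_{jn}/(∑_{k=1}^{n-1} α_{kn}) for 1 ≤ i < j ≤ n-1, with α'_{in} = 0. Then L(α) = L(α') + (1/∑_{i=1}^{n-1} α_{in}) · v v^T, where v = ∑_{i=1}^{n-1} α_{in}(e_i - e_n). -/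
open Matrix BigOperators

/-- The standard basis vector difference `e_i - e_j` in `ℝ^n`. -/
noncomputable def wvec {n : ℕ} (i j : Fin n) : Fin n → ℝ :=
  Pi.single i 1 - Pi.single j 1

/-- The Laplacian of the weighted graph with edge weights `α i j` for `i < j`. -/
noncomputable def Lap {n : ℕ} (α : Fin n → Fin n → ℝ) : Matrix (Fin n) (Fin n) ℝ :=
  ∑ i, ∑ j, if i < j then α i j • Matrix.vecMulVec (wvec i j) (wvec i j) else 0

/-!
Eliminating the last vertex turns its star into a mesh. With `w i = e_i - e_n`, weights `a i` and
`s = ∑ a i ≠ 0`, `v = ∑ a i • w i`, the weighted Lagrange identity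
`s ∑ a_i w_i w_iᵀ - v vᵀ = ∑_{i<j} a_i a_j (w_i - w_j)(w_i - w_j)ᵀ`
follows by pairing the terms `(i, j)` and `(j, i)` of the double sum
`∑_{i,j} a_i a_j w_i (w_i - w_j)ᵀ`. Since `e_i - e_j = w_i - w_j`, the mesh on the right adds exactly
the weight `α_in α_jn / s` to each edge `ij` with `i, j < n`.
-/

open Finset

namespace Finset

variable {ι : Type*} [Fintype ι] [LinearOrder ι]

theorem sum_sum_ite_lt_add_sum_diag {M : Type*} [AddCommMonoid M] (f : ι → ι → M) :
    ∑ i, ∑ j, (if i < j then f i j + f j i else 0) + ∑ i, f i i = ∑ i, ∑ j, f i j := by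
  have hswap : ∑ i, ∑ j, (if i < j then f j i else 0) = ∑ i, ∑ j, if j < i then f i j else 0 :=
    sum_comm
  have hdiag : ∑ i, f i i = ∑ i, ∑ j, if i = j then f i j else 0 := by simp
  simp only [ite_add_zero, sum_add_distrib, hswap, hdiag]
  simp only [← sum_add_distrib]
  refine sum_congr rfl fun i _ => sum_congr rfl fun j _ => ?_
  rcases lt_trichotomy i j with h | rfl | h
  · simp [h, h.not_gt, h.ne]
  · simp
  · simp [h, h.not_gt, h.ne']

theorem sum_mul_sum_mul_mul_eq_sum_lt_add {R : Type*} [CommRing R] (a x y : ι → R) :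
    (∑ i, a i) * ∑ i, a i * (x i * y i) =
      ∑ i, ∑ j, (if i < j then a i * a j * ((x i - x j) * (y i - y j)) else 0) +
        (∑ i, a i * x i) * ∑ i, a i * y i := by
  have hrow : ∀ i, ∑ j, a i * a j * (x i * y i - x i * y j) =
      a i * (x i * y i) * ∑ j, a j - a i * x i * ∑ j, a j * y j := fun i => by
    simp only [mul_sum, ← sum_sub_distrib]
    exact sum_congr rfl fun j _ => by ring
  have hsplit := sum_sum_ite_lt_add_sum_diag fun i j => a i * a j * (x i * y i - x i * y j)
  have hpair : ∀ i j, a i * a j * (x i * y i - x i * y j) + a j * a i * (x j * y j - x j * y i) =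
      a i * a j * ((x i - x j) * (y i - y j)) := fun i j => by ring
  simp only [hpair, sub_self, mul_zero, sum_const_zero, add_zero, hrow, sum_sub_distrib,
    ← sum_mul] at hsplit
  rw [hsplit]
  ring

end Finset

namespace Matrix

variable {ι : Type*} [Fintype ι] [LinearOrder ι]

theorem sum_smul_vecMulVec_self_eq_mesh_add {m K : Type*} [Field K] (a : ι → K) (w : ι → m → K)
    (hs : ∑ i, a i ≠ 0) :
    ∑ i, a i • vecMulVec (w i) (w i) =
      ∑ i, ∑ j, (if i < j then (a i * a j / ∑ k, a k) • vecMulVec (w i - w j) (w i - w j) else 0) +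
        (1 / ∑ i, a i) • vecMulVec (∑ i, a i • w i) (∑ i, a i • w i) := by
  ext k l
  have key := sum_mul_sum_mul_mul_eq_sum_lt_add a (fun i => w i k) (fun i => w i l)
  simp only [Matrix.sum_apply, Matrix.add_apply, Matrix.smul_apply, vecMulVec_apply,
    apply_ite (fun M : Matrix m m K => M k l), Finset.sum_apply, Pi.smul_apply, Pi.sub_apply,
    smul_eq_mul, Matrix.zero_apply]
  have hmesh : (∑ i, ∑ j, if i < j then
        (a i * a j / ∑ k, a k) * ((w i k - w j k) * (w i l - w j l)) else 0) =
      (1 / ∑ k, a k) * ∑ i, ∑ j, if i < j then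
        a i * a j * ((w i k - w j k) * (w i l - w j l)) else 0 := by
    simp only [mul_sum, mul_ite, mul_zero]
    refine sum_congr rfl fun i _ => sum_congr rfl fun j _ => ?_
    split_ifs <;> ring
  rw [hmesh, ← mul_add, ← key, one_div, inv_mul_cancel_left₀ hs]

end Matrix

theorem wvec_castSucc_castSucc {n : ℕ} (i j : Fin n) :
    wvec i.castSucc j.castSucc = wvec i.castSucc (Fin.last n) - wvec j.castSucc (Fin.last n) := by
  simp only [wvec]
  abel

theorem Lap_eq_sum_lt_add_sum_last {n : ℕ} (β : Fin (n + 1) → Fin (n + 1) → ℝ) :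
    Lap β = ∑ i : Fin n, ∑ j : Fin n, (if i < j then β i.castSucc j.castSucc •
        vecMulVec (wvec i.castSucc j.castSucc) (wvec i.castSucc j.castSucc) else 0) +
      ∑ i : Fin n, β i.castSucc (Fin.last n) •
        vecMulVec (wvec i.castSucc (Fin.last n)) (wvec i.castSucc (Fin.last n)) := by
  have hlast : ∀ j : Fin (n + 1), ¬ Fin.last n < j := fun j => (Fin.le_last j).not_gt
  simp [Lap, Fin.sum_univ_castSucc, Fin.castSucc_lt_last, hlast, sum_add_distrib]

theorem stmt0_general (n : ℕ) (α : Fin (n+1) → Fin (n+1) → ℝ)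
    (hs : 0 < ∑ i : Fin n, α i.castSucc (Fin.last n))
    (α' : Fin (n+1) → Fin (n+1) → ℝ)
    (hα' : ∀ i j : Fin n, i < j → α' i.castSucc j.castSucc
      = α i.castSucc j.castSucc +
        α i.castSucc (Fin.last n) * α j.castSucc (Fin.last n) /
          ∑ k : Fin n, α k.castSucc (Fin.last n))
    (hα'0 : ∀ i : Fin n, α' i.castSucc (Fin.last n) = 0) :
    Lap α = Lap α' + (1 / ∑ i : Fin n, α i.castSucc (Fin.last n)) •
      Matrix.vecMulVec (∑ i : Fin n, α i.castSucc (Fin.last n) • wvec i.castSucc (Fin.last n))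
                       (∑ i : Fin n, α i.castSucc (Fin.last n) • wvec i.castSucc (Fin.last n)) := by
  have hstar := sum_smul_vecMulVec_self_eq_mesh_add (fun i : Fin n => α i.castSucc (Fin.last n))
    (fun i : Fin n => wvec i.castSucc (Fin.last n)) hs.ne'
  rw [Lap_eq_sum_lt_add_sum_last α, Lap_eq_sum_lt_add_sum_last α', hstar]
  simp only [hα'0, zero_smul, sum_const_zero, add_zero, ← add_assoc, ← sum_add_distrib]
  congr 1
  refine sum_congr rfl fun i _ => sum_congr rfl fun j _ => ?_
  split_ifs with hij
  · rw [hα' i j hij, add_smul, wvec_castSucc_castSucc]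
  · simp

theorem stmt0 (n : ℕ) (hn : 1 ≤ n) (α : Fin (n+1) → Fin (n+1) → ℝ)
    (hα : ∀ i j : Fin (n+1), i < j → 0 ≤ α i j)
    (hs : 0 < ∑ i : Fin n, α i.castSucc (Fin.last n))
    (α' : Fin (n+1) → Fin (n+1) → ℝ)
    (hα' : ∀ i j : Fin n, i < j → α' i.castSucc j.castSucc
      = α i.castSucc j.castSucc +
        α i.castSucc (Fin.last n) * α j.castSucc (Fin.last n) /
          ∑ k : Fin n, α k.castSucc (Fin.last n))
    (hα'0 : ∀ i : Fin n, α' i.castSucc (Fin.last n) = 0) :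
    Lap α = Lap α' + (1 / ∑ i : Fin n, α i.castSucc (Fin.last n)) •
      Matrix.vecMulVec (∑ i : Fin n, α i.castSucc (Fin.last n) • wvec i.castSucc (Fin.last n))
                       (∑ i : Fin n, α i.castSucc (Fin.last n) • wvec i.castSucc (Fin.last n)) :=
  stmt0_general n α hs α' hα' hα'0
end

section
/- Let n ≥ 2 and let α, α' be as in the rank-one decomposition of the weighted graph Laplacian (α'_{ij} = α_{ij} + α_{in}α_{jn}/∑_k α_{kn} for i,j < n, α'_{in} = 0, assuming ∑_{i<n} α_{in} > 0). Then the eigenvalues interlace: if μ_1(α) ≤ … ≤ μ_n(α) and μ_1(α') ≤ … ≤ μ_n(α') are the eigenvalues of L(α) and L(α'), then μ_k(α') ≤ μ_k(α) ≤ μ_{k+1}(α') for all 1 ≤ k ≤ n-1. -/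
/-! Write `a i = α i n`, `s = ∑ a i` and `v = ∑ a i (e_i - e_n)`. Deleting vertex `n` and
joining its neighbours by the weights `a i a j / s` changes the Laplacian quadratic form by a
rank-one square: by Lagrange's identity `xᵀ L(α) x = xᵀ L(α') x + (v ⬝ x)² / s`.

A positive semidefinite rank-one update interlaces the spectra. Both inequalities are
Courant–Fischer dimension counts: the span of the eigenvectors of one matrix for its `k`-th
and larger eigenvalues meets the span of those of the other matrix for its `k`-th and smaller
ones, as the dimensions add up to more than the whole space, and at a nonzero common vector
the two Rayleigh quotients can be compared. For `μ_k(α) ≤ μ_{k+1}(α')` one first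
cuts down to the hyperplane `v^⊥`, where the two quadratic forms agree; this costs one
dimension. -/

open Matrix BigOperators

/-- The eigenvalues of a Hermitian matrix, listed in nondecreasing order. -/
noncomputable def sortedEigs {n : ℕ} (A : Matrix (Fin n) (Fin n) ℝ)
    (hA : A.IsHermitian) : Fin n → ℝ :=
  hA.eigenvalues ∘ Tuple.sort hA.eigenvalues

open Module
open scoped RealInnerProductSpace

theorem Submodule.exists_mem_inf_ne_zero_of_finrank_lt_add {K V : Type*} [DivisionRing K]
    [AddCommGroup V] [Module K V] [FiniteDimensional K V] {S T : Submodule K V}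
    (h : finrank K V < finrank K S + finrank K T) : ∃ x ∈ S ⊓ T, x ≠ 0 := by
  have hsup := Submodule.finrank_sup_add_finrank_inf_eq S T
  have hle := Submodule.finrank_le (S ⊔ T)
  exact Submodule.exists_mem_ne_zero_of_ne_bot fun hbot => by
    rw [hbot, finrank_bot] at hsup
    omega

namespace OrthonormalBasis

variable {ι E : Type*} [Fintype ι] [NormedAddCommGroup E] [InnerProductSpace ℝ E]
  (b : OrthonormalBasis ι ℝ E)

theorem finrank_span_image (s : Finset ι) :
    finrank ℝ (Submodule.span ℝ (b '' s)) = s.card := by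
  classical
  rw [← Finset.coe_image, finrank_span_finset_eq_card,
    Finset.card_image_of_injective _ b.orthonormal.linearIndependent.injective]
  rw [Finset.coe_image]
  exact (b.orthonormal.linearIndependent.linearIndepOn _).id_image

theorem inner_eq_zero_of_mem_span_image {s : Set ι} {x : E}
    (hx : x ∈ Submodule.span ℝ (b '' s)) {j : ι} (hj : j ∉ s) : ⟪b j, x⟫ = 0 := by
  induction hx using Submodule.span_induction with
  | mem y hy =>
    obtain ⟨i, hi, rfl⟩ := hy
    exact b.orthonormal.2 fun hji => hj (hji ▸ hi)
  | zero => exact inner_zero_right _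
  | add y z _ _ hy hz => rw [inner_add_right, hy, hz, add_zero]
  | smul c y _ hy => rw [inner_smul_right, hy, mul_zero]

variable {b} {T : E →ₗ[ℝ] E} {μ : ι → ℝ}

theorem inner_map_self_eq_sum (hb : ∀ i, T (b i) = μ i • b i) (x : E) :
    ⟪x, T x⟫ = ∑ i, μ i * ⟪b i, x⟫ ^ 2 := by
  have hTx : T x = ∑ i, (μ i * ⟪b i, x⟫) • b i := by
    conv_lhs => rw [← b.sum_repr' x]
    simp only [map_sum, map_smul, hb, smul_smul, mul_comm]
  rw [hTx, inner_sum]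
  exact Finset.sum_congr rfl fun i _ => by rw [inner_smul_right, real_inner_comm]; ring

theorem inner_map_self_eq_sum_of_mem_span (hb : ∀ i, T (b i) = μ i • b i) {s : Finset ι}
    {x : E} (hx : x ∈ Submodule.span ℝ (b '' s)) :
    ⟪x, T x⟫ = ∑ i ∈ s, μ i * ⟪b i, x⟫ ^ 2 := by
  rw [inner_map_self_eq_sum hb, Finset.sum_subset (Finset.subset_univ s)]
  intro i _ hi
  rw [b.inner_eq_zero_of_mem_span_image hx (Finset.mem_coe.not.2 hi)]
  ring

theorem norm_sq_eq_sum_of_mem_span {s : Finset ι} {x : E}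
    (hx : x ∈ Submodule.span ℝ (b '' s)) : ‖x‖ ^ 2 = ∑ i ∈ s, ⟪b i, x⟫ ^ 2 := by
  simpa using inner_map_self_eq_sum_of_mem_span (T := LinearMap.id) (μ := 1) (by simp) hx

theorem mul_norm_sq_le_inner_map_self (hb : ∀ i, T (b i) = μ i • b i) {s : Finset ι} {x : E}
    (hx : x ∈ Submodule.span ℝ (b '' s)) {c : ℝ} (hc : ∀ i ∈ s, c ≤ μ i) :
    c * ‖x‖ ^ 2 ≤ ⟪x, T x⟫ := by
  rw [norm_sq_eq_sum_of_mem_span hx, inner_map_self_eq_sum_of_mem_span hb hx, Finset.mul_sum]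
  exact Finset.sum_le_sum fun i hi => mul_le_mul_of_nonneg_right (hc i hi) (sq_nonneg _)

theorem inner_map_self_le_mul_norm_sq (hb : ∀ i, T (b i) = μ i • b i) {s : Finset ι} {x : E}
    (hx : x ∈ Submodule.span ℝ (b '' s)) {c : ℝ} (hc : ∀ i ∈ s, μ i ≤ c) :
    ⟪x, T x⟫ ≤ c * ‖x‖ ^ 2 := by
  rw [norm_sq_eq_sum_of_mem_span hx, inner_map_self_eq_sum_of_mem_span hb hx, Finset.mul_sum]
  exact Finset.sum_le_sum fun i hi => mul_le_mul_of_nonneg_right (hc i hi) (sq_nonneg _)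

section Sorted

variable {m : ℕ} {b : OrthonormalBasis (Fin m) ℝ E} {μ : Fin m → ℝ}

theorem exists_mul_norm_sq_le_inner_map_self (hb : ∀ i, T (b i) = μ i • b i)
    (hμ : Monotone μ) {S : Submodule ℝ E} {k : Fin m} (hS : k + 1 ≤ finrank ℝ S) :
    ∃ x ∈ S, x ≠ 0 ∧ μ k * ‖x‖ ^ 2 ≤ ⟪x, T x⟫ := by
  have : FiniteDimensional ℝ E := .of_basis b.toBasis
  have hdim : finrank ℝ E < finrank ℝ (Submodule.span ℝ (b '' Finset.Ici k)) + finrank ℝ S := by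
    rw [b.finrank_span_image, Fin.card_Ici, finrank_eq_card_basis b.toBasis, Fintype.card_fin]
    omega
  obtain ⟨x, ⟨hxk, hxS⟩, hx0⟩ := Submodule.exists_mem_inf_ne_zero_of_finrank_lt_add hdim
  exact ⟨x, hxS, hx0, mul_norm_sq_le_inner_map_self hb hxk fun i hi => hμ (Finset.mem_Ici.1 hi)⟩

theorem exists_inner_map_self_le_mul_norm_sq (hb : ∀ i, T (b i) = μ i • b i)
    (hμ : Monotone μ) {S : Submodule ℝ E} {k : Fin m} (hS : m ≤ k + finrank ℝ S) :
    ∃ x ∈ S, x ≠ 0 ∧ ⟪x, T x⟫ ≤ μ k * ‖x‖ ^ 2 := by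
  have : FiniteDimensional ℝ E := .of_basis b.toBasis
  have hdim : finrank ℝ E < finrank ℝ (Submodule.span ℝ (b '' Finset.Iic k)) + finrank ℝ S := by
    rw [b.finrank_span_image, Fin.card_Iic, finrank_eq_card_basis b.toBasis, Fintype.card_fin]
    omega
  obtain ⟨x, ⟨hxk, hxS⟩, hx0⟩ := Submodule.exists_mem_inf_ne_zero_of_finrank_lt_add hdim
  exact ⟨x, hxS, hx0, inner_map_self_le_mul_norm_sq hb hxk fun i hi => hμ (Finset.mem_Iic.1 hi)⟩

theorem le_of_forall_inner_map_self_le {T' : E →ₗ[ℝ] E} {b' : OrthonormalBasis (Fin m) ℝ E}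
    {μ' : Fin m → ℝ} (hb : ∀ i, T (b i) = μ i • b i) (hμ : Monotone μ)
    (hb' : ∀ i, T' (b' i) = μ' i • b' i) (hμ' : Monotone μ')
    (hle : ∀ x, ⟪x, T' x⟫ ≤ ⟪x, T x⟫) (k : Fin m) : μ' k ≤ μ k := by
  obtain ⟨x, hx, hx0, hxT⟩ := exists_inner_map_self_le_mul_norm_sq hb hμ
    (S := Submodule.span ℝ (b' '' Finset.Ici k)) (k := k)
    (by rw [b'.finrank_span_image, Fin.card_Ici]; omega)
  have hxT' := mul_norm_sq_le_inner_map_self hb' hx fun i hi => hμ' (Finset.mem_Ici.1 hi)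
  exact le_of_mul_le_mul_right ((hxT'.trans (hle x)).trans hxT) (pow_pos (norm_pos_iff.2 hx0) 2)

end Sorted

theorem le_succ_of_inner_map_self_eq_of_inner_eq_zero {n : ℕ} {T' : E →ₗ[ℝ] E}
    {b b' : OrthonormalBasis (Fin (n + 1)) ℝ E} {μ μ' : Fin (n + 1) → ℝ}
    (hb : ∀ i, T (b i) = μ i • b i) (hμ : Monotone μ)
    (hb' : ∀ i, T' (b' i) = μ' i • b' i) (hμ' : Monotone μ') (v : E)
    (heq : ∀ x, ⟪v, x⟫ = 0 → ⟪x, T x⟫ = ⟪x, T' x⟫) (k : Fin n) :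
    μ k.castSucc ≤ μ' k.succ := by
  have : FiniteDimensional ℝ E := .of_basis b.toBasis
  set U := Submodule.span ℝ (b' '' Finset.Iic k.succ)
  have hE : finrank ℝ E = n + 1 := by rw [finrank_eq_card_basis b.toBasis, Fintype.card_fin]
  have hU : finrank ℝ U = k + 2 := by rw [b'.finrank_span_image, Fin.card_Iic, Fin.val_succ]
  have hline : finrank ℝ (ℝ ∙ v) ≤ 1 := by simpa using finrank_span_le_card (R := ℝ) {v}
  have hS : (k.castSucc : ℕ) + 1 ≤ finrank ℝ ↥(U ⊓ (ℝ ∙ v)ᗮ) := by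
    have hsup := Submodule.finrank_sup_add_finrank_inf_eq U (ℝ ∙ v)ᗮ
    have hle := Submodule.finrank_le (U ⊔ (ℝ ∙ v)ᗮ)
    have horth := (ℝ ∙ v).finrank_add_finrank_orthogonal
    rw [Fin.val_castSucc]
    omega
  obtain ⟨x, ⟨hxU, hxv⟩, hx0, hxT⟩ := exists_mul_norm_sq_le_inner_map_self hb hμ hS
  have hxT' := inner_map_self_le_mul_norm_sq hb' hxU fun i hi => hμ' (Finset.mem_Iic.1 hi)
  have hvx : ⟪v, x⟫ = 0 := Submodule.mem_orthogonal_singleton_iff_inner_right.1 hxv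
  exact le_of_mul_le_mul_right ((hxT.trans (heq x hvx).le).trans hxT')
    (pow_pos (norm_pos_iff.2 hx0) 2)

end OrthonormalBasis

theorem Matrix.inner_toEuclideanLin_self {m : ℕ} (A : Matrix (Fin m) (Fin m) ℝ)
    (x : EuclideanSpace ℝ (Fin m)) : ⟪x, toEuclideanLin A x⟫ = x.ofLp ⬝ᵥ A *ᵥ x.ofLp := by
  simp [EuclideanSpace.inner_eq_star_dotProduct, toLpLin_apply, dotProduct_comm]

namespace Matrix.IsHermitian

variable {m : ℕ} {A : Matrix (Fin m) (Fin m) ℝ} (hA : A.IsHermitian)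

noncomputable def sortedEigenvectorBasis :
    OrthonormalBasis (Fin m) ℝ (EuclideanSpace ℝ (Fin m)) :=
  hA.eigenvectorBasis.reindex (Tuple.sort hA.eigenvalues).symm

theorem toEuclideanLin_sortedEigenvectorBasis (i : Fin m) :
    toEuclideanLin A (hA.sortedEigenvectorBasis i)
      = sortedEigs A hA i • hA.sortedEigenvectorBasis i := by
  rw [sortedEigenvectorBasis, OrthonormalBasis.reindex_apply, Equiv.symm_symm]
  apply WithLp.ofLp_injective
  simp [toLpLin_apply, hA.mulVec_eigenvectorBasis, sortedEigs]

theorem monotone_sortedEigs : Monotone (sortedEigs A hA) :=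
  Tuple.monotone_sort _

end Matrix.IsHermitian

theorem sortedEigs_interlace_of_dotProduct_mulVec_eq_add_mul_sq {n : ℕ}
    {A B : Matrix (Fin (n + 1)) (Fin (n + 1)) ℝ} (hA : A.IsHermitian) (hB : B.IsHermitian)
    {c : ℝ} (hc : 0 ≤ c) (v : Fin (n + 1) → ℝ)
    (h : ∀ x, x ⬝ᵥ A *ᵥ x = x ⬝ᵥ B *ᵥ x + c * (v ⬝ᵥ x) ^ 2) (k : Fin n) :
    sortedEigs B hB k.castSucc ≤ sortedEigs A hA k.castSucc ∧
      sortedEigs A hA k.castSucc ≤ sortedEigs B hB k.succ := by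
  have hquad : ∀ x : EuclideanSpace ℝ (Fin (n + 1)),
      ⟪x, toEuclideanLin A x⟫ = ⟪x, toEuclideanLin B x⟫ + c * ⟪WithLp.toLp 2 v, x⟫ ^ 2 := by
    intro x
    rw [inner_toEuclideanLin_self, inner_toEuclideanLin_self, h,
      EuclideanSpace.inner_eq_star_dotProduct, star_trivial, WithLp.ofLp_toLp, dotProduct_comm _ v]
  have hA' := hA.toEuclideanLin_sortedEigenvectorBasis
  have hB' := hB.toEuclideanLin_sortedEigenvectorBasis
  exact ⟨OrthonormalBasis.le_of_forall_inner_map_self_le hA' hA.monotone_sortedEigs hB'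
      hB.monotone_sortedEigs
      (fun x => by rw [hquad x]; exact le_add_of_nonneg_right (by positivity)) _,
    OrthonormalBasis.le_succ_of_inner_map_self_eq_of_inner_eq_zero hA' hA.monotone_sortedEigs hB'
      hB.monotone_sortedEigs _ (fun x hx => by rw [hquad x, hx]; ring) k⟩

theorem wvec_dotProduct {n : ℕ} (i j : Fin n) (x : Fin n → ℝ) : wvec i j ⬝ᵥ x = x i - x j := by
  simp [wvec, sub_dotProduct]

theorem dotProduct_Lap_mulVec {n : ℕ} (β : Fin n → Fin n → ℝ) (x : Fin n → ℝ) :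
    x ⬝ᵥ Lap β *ᵥ x = ∑ i, ∑ j, if i < j then β i j * (x i - x j) ^ 2 else 0 := by
  simp only [Lap, sum_mulVec, dotProduct_sum]
  refine Finset.sum_congr rfl fun i _ => Finset.sum_congr rfl fun j _ => ?_
  split_ifs
  · simp only [smul_mulVec, vecMulVec_mulVec, wvec_dotProduct, op_smul_eq_smul,
      dotProduct_comm x, smul_dotProduct, smul_eq_mul]
    ring
  · simp

theorem dotProduct_Lap_mulVec_succ {n : ℕ} (β : Fin (n + 1) → Fin (n + 1) → ℝ)
    (x : Fin (n + 1) → ℝ) :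
    x ⬝ᵥ Lap β *ᵥ x
      = ∑ i : Fin n, ∑ j : Fin n,
          (if i < j then β i.castSucc j.castSucc * (x i.castSucc - x j.castSucc) ^ 2 else 0)
        + ∑ i : Fin n, β i.castSucc (Fin.last n) * (x i.castSucc - x (Fin.last n)) ^ 2 := by
  simp [dotProduct_Lap_mulVec, Fin.sum_univ_castSucc, Fin.castSucc_lt_last,
    Finset.sum_add_distrib, (Fin.le_last _).not_gt]

theorem sum_sum_ite_lt_add_self {ι M : Type*} [Fintype ι] [LinearOrder ι] [AddCommMonoid M]
    {f : ι → ι → M} (hsymm : ∀ i j, f i j = f j i) (hdiag : ∀ i, f i i = 0) :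
    ∑ i, ∑ j, (if i < j then f i j else 0) + ∑ i, ∑ j, (if i < j then f i j else 0)
      = ∑ i, ∑ j, f i j := by
  have hsplit : ∀ i j, f i j = (if i < j then f i j else 0) + (if j < i then f j i else 0) := by
    intro i j
    rcases lt_trichotomy i j with h | rfl | h
    · simp [h, h.not_gt]
    · simp [hdiag]
    · simp [h, h.not_gt, hsymm i j]
  rw [Finset.sum_congr rfl fun i _ => Finset.sum_congr rfl fun j _ => hsplit i j]
  simp only [Finset.sum_add_distrib]
  rw [Finset.sum_comm (f := fun i j => if j < i then f j i else 0)]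

theorem sum_sum_ite_lt_mul_mul_sq_sub {ι : Type*} [Fintype ι] [LinearOrder ι] (a y : ι → ℝ) :
    ∑ i, ∑ j, (if i < j then a i * a j * (y i - y j) ^ 2 else 0)
      = (∑ i, a i) * (∑ i, a i * y i ^ 2) - (∑ i, a i * y i) ^ 2 := by
  have hfull : ∑ i, ∑ j, a i * a j * (y i - y j) ^ 2
      = (∑ i, a i * y i ^ 2) * (∑ i, a i) + (∑ i, a i) * (∑ i, a i * y i ^ 2)
        - 2 * ((∑ i, a i * y i) * (∑ i, a i * y i)) := by
    simp only [Finset.sum_mul_sum]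
    simp only [Finset.mul_sum, ← Finset.sum_add_distrib, ← Finset.sum_sub_distrib]
    exact Finset.sum_congr rfl fun i _ => Finset.sum_congr rfl fun j _ => by ring
  have hhalf := sum_sum_ite_lt_add_self (f := fun i j => a i * a j * (y i - y j) ^ 2)
    (fun i j => by ring) (fun i => by ring)
  linarith

theorem dotProduct_Lap_mulVec_eq_add_inv_mul_sq {n : ℕ} {α α' : Fin (n + 1) → Fin (n + 1) → ℝ}
    (hs : ∑ k : Fin n, α k.castSucc (Fin.last n) ≠ 0)
    (hα' : ∀ i j : Fin n, i < j → α' i.castSucc j.castSucc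
      = α i.castSucc j.castSucc +
        α i.castSucc (Fin.last n) * α j.castSucc (Fin.last n) /
          ∑ k : Fin n, α k.castSucc (Fin.last n))
    (hα'0 : ∀ i : Fin n, α' i.castSucc (Fin.last n) = 0) (x : Fin (n + 1) → ℝ) :
    x ⬝ᵥ Lap α *ᵥ x = x ⬝ᵥ Lap α' *ᵥ x + (∑ k : Fin n, α k.castSucc (Fin.last n))⁻¹ *
      ((∑ i : Fin n, α i.castSucc (Fin.last n) • wvec i.castSucc (Fin.last n)) ⬝ᵥ x) ^ 2 := by
  set a : Fin n → ℝ := fun i => α i.castSucc (Fin.last n)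
  set y : Fin n → ℝ := fun i => x i.castSucc - x (Fin.last n)
  have hv : (∑ i, a i • wvec i.castSucc (Fin.last n)) ⬝ᵥ x = ∑ i, a i * y i := by
    simp [sum_dotProduct, smul_dotProduct, wvec_dotProduct, y]
  have hpairs : ∑ i : Fin n, ∑ j : Fin n,
        (if i < j then α' i.castSucc j.castSucc * (x i.castSucc - x j.castSucc) ^ 2 else 0)
      = ∑ i : Fin n, ∑ j : Fin n,
          (if i < j then α i.castSucc j.castSucc * (x i.castSucc - x j.castSucc) ^ 2 else 0)
        + (∑ i, a i)⁻¹ * ∑ i, ∑ j, (if i < j then a i * a j * (y i - y j) ^ 2 else 0) := by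
    simp only [Finset.mul_sum, ← Finset.sum_add_distrib]
    refine Finset.sum_congr rfl fun i _ => Finset.sum_congr rfl fun j _ => ?_
    split_ifs with hij
    · rw [hα' i j hij]
      simp only [y, a]
      field_simp
      ring
    · simp
  rw [dotProduct_Lap_mulVec_succ, dotProduct_Lap_mulVec_succ, hpairs,
    sum_sum_ite_lt_mul_mul_sq_sub, hv]
  simp only [hα'0, zero_mul, Finset.sum_const_zero, add_zero]
  field_simp
  ring

theorem stmt1_general (n : ℕ) (α : Fin (n+1) → Fin (n+1) → ℝ)
    (hs : 0 < ∑ i : Fin n, α i.castSucc (Fin.last n))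
    (α' : Fin (n+1) → Fin (n+1) → ℝ)
    (hα' : ∀ i j : Fin n, i < j → α' i.castSucc j.castSucc
      = α i.castSucc j.castSucc +
        α i.castSucc (Fin.last n) * α j.castSucc (Fin.last n) /
          ∑ k : Fin n, α k.castSucc (Fin.last n))
    (hα'0 : ∀ i : Fin n, α' i.castSucc (Fin.last n) = 0)
    (hA : (Lap α).IsHermitian) (hB : (Lap α').IsHermitian) :
    ∀ k : Fin n,
      sortedEigs (Lap α') hB k.castSucc ≤ sortedEigs (Lap α) hA k.castSucc ∧
      sortedEigs (Lap α) hA k.castSucc ≤ sortedEigs (Lap α') hB k.succ :=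
  sortedEigs_interlace_of_dotProduct_mulVec_eq_add_mul_sq hA hB (inv_nonneg.2 hs.le) _
    (dotProduct_Lap_mulVec_eq_add_inv_mul_sq hs.ne' hα' hα'0)

theorem stmt1 (n : ℕ) (hn : 1 ≤ n) (α : Fin (n+1) → Fin (n+1) → ℝ)
    (hα : ∀ i j : Fin (n+1), i < j → 0 ≤ α i j)
    (hs : 0 < ∑ i : Fin n, α i.castSucc (Fin.last n))
    (α' : Fin (n+1) → Fin (n+1) → ℝ)
    (hα' : ∀ i j : Fin n, i < j → α' i.castSucc j.castSucc
      = α i.castSucc j.castSucc +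
        α i.castSucc (Fin.last n) * α j.castSucc (Fin.last n) /
          ∑ k : Fin n, α k.castSucc (Fin.last n))
    (hα'0 : ∀ i : Fin n, α' i.castSucc (Fin.last n) = 0)
    (hA : (Lap α).IsHermitian) (hB : (Lap α').IsHermitian) :
    ∀ k : Fin n,
      sortedEigs (Lap α') hB k.castSucc ≤ sortedEigs (Lap α) hA k.castSucc ∧
      sortedEigs (Lap α) hA k.castSucc ≤ sortedEigs (Lap α') hB k.succ :=
  stmt1_general n α hs α' hα' hα'0 hA hB
end

section
/- For any real numbers γ_1, γ_2 ≥ 0 with γ_1 + γ_2 > 0 and any function g : S_3 → ℝ, ∑_{σ ∈ S_3} (γ_1 [g(σ) − g((1 3)σ)]^2 + γ_2 [g(σ) − g((2 3)σ)]^2) ≥ ∑_{σ ∈ S_3} (γ_1 γ_2 / (γ_1 + γ_2)) [g(σ) − g((1 2)σ)]^2. -/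
/-!
Put `s = (1 3)`, `t = (2 3)`, `u = (1 2)`, so that `u s = t u` and `r = u s` is a 3-cycle.
Substituting `σ ↦ u σ` in the `γ₂`-sum pairs the edge `{σ, s σ}` with the edge `{u σ, t u σ}`;
with `h σ = g σ - g (u σ)` the two differences differ by `h σ - h (s σ)`, and
`γ₁ a² + γ₂ b² ≥ γ₁ γ₂ / (γ₁ + γ₂) (a - b)²` bounds the left side below by
`γ₁ γ₂ / (γ₁ + γ₂) ∑ (h σ - h (s σ))²`. Finally `h (r σ) = -h (s σ)`, and
`0 ≤ ∑ (h σ + h (r σ) + h (r² σ))²` gives `∑ (h σ - h (s σ))² ≥ ∑ h σ²`.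
-/

open BigOperators Equiv

theorem mul_div_add_mul_sub_sq_le {γ₁ γ₂ : ℝ} (hpos : 0 < γ₁ + γ₂) (a b : ℝ) :
    γ₁ * γ₂ / (γ₁ + γ₂) * (a - b) ^ 2 ≤ γ₁ * a ^ 2 + γ₂ * b ^ 2 := by
  have key : (γ₁ + γ₂) * (γ₁ * a ^ 2 + γ₂ * b ^ 2) - γ₁ * γ₂ * (a - b) ^ 2
      = (γ₁ * a + γ₂ * b) ^ 2 := by ring
  rw [div_mul_eq_mul_div, div_le_iff₀ hpos]
  linarith [sq_nonneg (γ₁ * a + γ₂ * b)]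

section FiniteGroup

variable {G : Type*} [Group G] [Fintype G]

theorem sum_sq_add_two_mul_sum_mul_mul_left_nonneg {r : G} (hr : r ^ 3 = 1) (h : G → ℝ) :
    0 ≤ ∑ σ, h σ ^ 2 + 2 * ∑ σ, h σ * h (r * σ) := by
  have translate (f : G → ℝ) : ∑ σ, f (r * σ) = ∑ σ, f σ := Equiv.sum_comp (Equiv.mulLeft r) f
  have hr3 : ∀ σ, r * (r * (r * σ)) = σ := fun σ => by
    simp only [← mul_assoc, ← pow_three', hr, one_mul]
  have hexpand : ∑ σ, (h σ + h (r * σ) + h (r * (r * σ))) ^ 2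
      = ∑ σ, h σ ^ 2 + ∑ σ, h (r * σ) ^ 2 + ∑ σ, h (r * (r * σ)) ^ 2
        + 2 * ∑ σ, h σ * h (r * σ) + 2 * ∑ σ, h (r * σ) * h (r * (r * σ))
        + 2 * ∑ σ, h σ * h (r * (r * σ)) := by
    simp only [Finset.mul_sum, ← Finset.sum_add_distrib]
    exact Finset.sum_congr rfl fun σ _ => by ring
  have hlast : ∑ σ, h σ * h (r * (r * σ)) = ∑ σ, h σ * h (r * σ) := by
    rw [← translate fun σ => h σ * h (r * (r * σ))]
    simp only [hr3, mul_comm (h (r * _))]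
  rw [translate fun σ => h σ ^ 2, translate fun σ => h (r * σ) ^ 2, translate fun σ => h σ ^ 2,
    translate fun σ => h σ * h (r * σ), hlast] at hexpand
  have := Finset.sum_nonneg fun σ (_ : σ ∈ Finset.univ) =>
    sq_nonneg (h σ + h (r * σ) + h (r * (r * σ)))
  linarith

theorem sum_sq_le_sum_sub_sq {r s : G} (hr : r ^ 3 = 1) {h : G → ℝ}
    (hrs : ∀ σ, h (r * σ) = -h (s * σ)) :
    ∑ σ, h σ ^ 2 ≤ ∑ σ, (h σ - h (s * σ)) ^ 2 := by
  have hs : ∑ σ, h (s * σ) ^ 2 = ∑ σ, h σ ^ 2 := Equiv.sum_comp (Equiv.mulLeft s) fun σ => h σ ^ 2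
  have hcross : ∑ σ, h σ * h (r * σ) = -∑ σ, h σ * h (s * σ) := by
    simp only [hrs, mul_neg, Finset.sum_neg_distrib]
  have := sum_sq_add_two_mul_sum_mul_mul_left_nonneg hr h
  simp only [sub_sq, Finset.sum_add_distrib, Finset.sum_sub_distrib, mul_assoc,
    ← Finset.mul_sum, hs]
  linarith

theorem dirichlet_form_comparison {s t u : G} (hu : u * u = 1) (hst : u * s = t * u)
    (hcycle : (u * s) ^ 3 = 1) {γ₁ γ₂ : ℝ} (h₁ : 0 ≤ γ₁) (h₂ : 0 ≤ γ₂) (hpos : 0 < γ₁ + γ₂)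
    (g : G → ℝ) :
    ∑ σ, γ₁ * γ₂ / (γ₁ + γ₂) * (g σ - g (u * σ)) ^ 2 ≤
      ∑ σ, (γ₁ * (g σ - g (s * σ)) ^ 2 + γ₂ * (g σ - g (t * σ)) ^ 2) := by
  set h : G → ℝ := fun σ => g σ - g (u * σ)
  have hrs : ∀ σ, h (u * s * σ) = -h (s * σ) := fun σ => by
    simp only [h, ← mul_assoc, hu, one_mul, neg_sub]
  have hpaired : ∑ σ, (γ₁ * (g σ - g (s * σ)) ^ 2 + γ₂ * (g σ - g (t * σ)) ^ 2)
      = ∑ σ, (γ₁ * (g σ - g (s * σ)) ^ 2 + γ₂ * (g (u * σ) - g (u * s * σ)) ^ 2) := by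
    rw [Finset.sum_add_distrib, Finset.sum_add_distrib, hst,
      ← Equiv.sum_comp (Equiv.mulLeft u) fun σ => γ₂ * (g σ - g (t * σ)) ^ 2]
    simp only [Equiv.coe_mulLeft, mul_assoc]
  have hc : 0 ≤ γ₁ * γ₂ / (γ₁ + γ₂) := by positivity
  calc ∑ σ, γ₁ * γ₂ / (γ₁ + γ₂) * h σ ^ 2
      = γ₁ * γ₂ / (γ₁ + γ₂) * ∑ σ, h σ ^ 2 := Finset.mul_sum _ _ _ |>.symm
    _ ≤ γ₁ * γ₂ / (γ₁ + γ₂) * ∑ σ, (h σ - h (s * σ)) ^ 2 :=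
      mul_le_mul_of_nonneg_left (sum_sq_le_sum_sub_sq hcycle hrs) hc
    _ = ∑ σ, γ₁ * γ₂ / (γ₁ + γ₂) * ((g σ - g (s * σ)) - (g (u * σ) - g (u * s * σ))) ^ 2 := by
      rw [Finset.mul_sum]
      simp only [h, mul_assoc]
      congr! 3
      ring
    _ ≤ _ := by
      rw [hpaired]
      exact Finset.sum_le_sum fun σ _ => mul_div_add_mul_sub_sq_le hpos _ _

end FiniteGroup

theorem stmt4 (γ₁ γ₂ : ℝ) (h₁ : 0 ≤ γ₁) (h₂ : 0 ≤ γ₂) (hpos : 0 < γ₁ + γ₂)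
    (g : Equiv.Perm (Fin 3) → ℝ) :
    ∑ σ : Equiv.Perm (Fin 3),
        (γ₁ * (g σ - g (Equiv.swap (0 : Fin 3) 2 * σ)) ^ 2 +
         γ₂ * (g σ - g (Equiv.swap (1 : Fin 3) 2 * σ)) ^ 2) ≥
    ∑ σ : Equiv.Perm (Fin 3),
        γ₁ * γ₂ / (γ₁ + γ₂) * (g σ - g (Equiv.swap (0 : Fin 3) 1 * σ)) ^ 2 :=
  dirichlet_form_comparison (by decide) (by decide) (by decide) h₁ h₂ hpos g
end

section
/- Let λ = (λ_1 ≥ λ_2 ≥ …) be a partition of k. Then ∑_{j≥2} λ_j^2 + ∑_{j≥2} ∑_{i=2}^{j-1} λ_i λ_j − ∑_{j≥1} (j−1) λ_j ≥ ∑_{j≥2} (j−1) λ_j (λ_j − 1) ≥ 0. In particular, (1/2)k(k−1) + ∑_j [(1/2)λ_j(λ_j − 1) − (j−1)λ_j] − k(λ_1 − 1) ≥ 0. -/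
open BigOperators Finset

/-!
Since `λ` is nonincreasing, `λ_i λ_j ≥ λ_j²` for `i < j`, so the `j`-th summand on the left of
the first inequality exceeds the `j`-th summand on the right by `∑_{1 ≤ i < j} (λ_i - λ_j) λ_j ≥ 0`;
the right side is nonnegative because `n (n - 1) ≥ 0` for natural `n`. For the last inequality,
substitute `k = ∑ λ_j`, expand `k²` and split off `λ_1`: the expression becomes exactly the left
side of the first inequality.
-/

section

variable {R : Type*}

theorem sq_sum_Ico [CommSemiring R] (f : ℕ → R) {m n : ℕ} (hmn : m ≤ n) :
    (∑ j ∈ Ico m n, f j) ^ 2 =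
      ∑ j ∈ Ico m n, f j ^ 2 + 2 * ∑ j ∈ Ico m n, ∑ i ∈ Ico m j, f i * f j := by
  induction n, hmn using Nat.le_induction with
  | base => simp
  | succ n hmn ih =>
    rw [sum_Ico_succ_top hmn, add_sq, ih, sum_Ico_succ_top hmn, sum_Ico_succ_top hmn, ← sum_mul]
    ring

section OrderedRing

variable [CommRing R] [LinearOrder R] [IsStrictOrderedRing R]

theorem natCast_mul_natCast_sub_one_nonneg (n : ℕ) : 0 ≤ (n : R) * (n - 1) := by
  rcases n.eq_zero_or_pos with rfl | hn
  · simp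
  · exact mul_nonneg n.cast_nonneg (sub_nonneg.2 (Nat.one_le_cast.2 hn))

theorem sum_natCast_mul_mul_sub_one_nonneg (s : Finset ℕ) (a : ℕ → ℕ) :
    0 ≤ ∑ j ∈ s, (j : R) * a j * (a j - 1) :=
  sum_nonneg fun j _ => by
    rw [mul_assoc]
    exact mul_nonneg j.cast_nonneg (natCast_mul_natCast_sub_one_nonneg _)

theorem mul_mul_sub_one_le_of_antitone {f : ℕ → R} (hf : Antitone f) {j : ℕ} (hj : 1 ≤ j)
    (hfj : 0 ≤ f j) :
    j * f j * (f j - 1) ≤ f j ^ 2 + ∑ i ∈ Ico 1 j, f i * f j - j * f j := by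
  have hgap : f j ^ 2 + ∑ i ∈ Ico 1 j, f i * f j - j * f j - j * f j * (f j - 1) =
      ∑ i ∈ Ico 1 j, (f i - f j) * f j := by
    simp only [sub_mul, sum_sub_distrib, sum_const, Nat.card_Ico, nsmul_eq_mul, Nat.cast_sub hj]
    ring
  have hgap_nonneg : 0 ≤ ∑ i ∈ Ico 1 j, (f i - f j) * f j :=
    sum_nonneg fun i hi => mul_nonneg (sub_nonneg.2 (hf (mem_Ico.1 hi).2.le)) hfj
  linarith

theorem sum_Ico_mul_mul_sub_one_le {f : ℕ → R} (hf : Antitone f) (hf0 : ∀ j, 0 ≤ f j) (k : ℕ) :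
    ∑ j ∈ Ico 1 k, j * f j * (f j - 1) ≤
      ∑ j ∈ Ico 1 k, f j ^ 2 + ∑ j ∈ Ico 1 k, ∑ i ∈ Ico 1 j, f i * f j -
        ∑ j ∈ range k, j * f j := by
  have hrange : ∑ j ∈ range k, (j : R) * f j = ∑ j ∈ Ico 1 k, j * f j := by
    rcases k.eq_zero_or_pos with rfl | hk
    · simp
    · simp [sum_range_eq_add_Ico _ hk]
  rw [hrange, ← sum_add_distrib, ← sum_sub_distrib]
  exact sum_le_sum fun j hj => mul_mul_sub_one_le_of_antitone hf (mem_Ico.1 hj).1 (hf0 j)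

end OrderedRing

theorem triangular_add_sum_content_sub_eq [Field R] [CharZero R] (f : ℕ → R) (k : ℕ) {s : R}
    (hs : ∑ j ∈ range k, f j = s) :
    s * (s - 1) / 2 + ∑ j ∈ range k, (f j * (f j - 1) / 2 - j * f j) - s * (f 0 - 1) =
      ∑ j ∈ Ico 1 k, f j ^ 2 + ∑ j ∈ Ico 1 k, ∑ i ∈ Ico 1 j, f i * f j -
        ∑ j ∈ range k, j * f j := by
  subst hs
  rcases k.eq_zero_or_pos with rfl | hk
  · simp
  have hsq := sq_sum_Ico f hk
  simp only [mul_sub, mul_one, sub_div, sum_sub_distrib, ← sum_div, ← sq,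
    sum_range_eq_add_Ico _ hk] at hsq ⊢
  linear_combination (1 / 2 : R) * hsq

end

/- `lam j` is the (j+1)-st part of a partition of `k` (0-indexed rows). -/
theorem stmt6_general (k : ℕ) (lam : ℕ → ℕ) (hanti : Antitone lam)
    (hsum : ∑ j ∈ Finset.range k, lam j = k) :
    ((∑ j ∈ Finset.Ico 1 k, (lam j : ℤ) ^ 2) +
        (∑ j ∈ Finset.Ico 1 k, ∑ i ∈ Finset.Ico 1 j, (lam i : ℤ) * lam j) -
        ∑ j ∈ Finset.range k, (j : ℤ) * lam j ≥
      ∑ j ∈ Finset.Ico 1 k, (j : ℤ) * lam j * ((lam j : ℤ) - 1)) ∧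
    (0 ≤ ∑ j ∈ Finset.Ico 1 k, (j : ℤ) * lam j * ((lam j : ℤ) - 1)) ∧
    (0 ≤ (k : ℝ) * ((k : ℝ) - 1) / 2 +
        (∑ j ∈ Finset.range k, ((lam j : ℝ) * ((lam j : ℝ) - 1) / 2 - (j : ℝ) * lam j)) -
        (k : ℝ) * ((lam 0 : ℝ) - 1)) := by
  refine ⟨sum_Ico_mul_mul_sub_one_le (Nat.mono_cast.comp_antitone hanti)
      (fun _ => Nat.cast_nonneg _) k, sum_natCast_mul_mul_sub_one_nonneg _ _, ?_⟩
  rw [triangular_add_sum_content_sub_eq _ k (by exact_mod_cast hsum)]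
  exact (sum_natCast_mul_mul_sub_one_nonneg _ _).trans
    (sum_Ico_mul_mul_sub_one_le (Nat.mono_cast.comp_antitone hanti) (fun _ => Nat.cast_nonneg _) k)

theorem stmt6 (k : ℕ) (lam : ℕ → ℕ) (hanti : Antitone lam)
    (hsum : ∑ j ∈ Finset.range k, lam j = k)
    (hzero : ∀ j, k ≤ j → lam j = 0) :
    ((∑ j ∈ Finset.Ico 1 k, (lam j : ℤ) ^ 2) +
        (∑ j ∈ Finset.Ico 1 k, ∑ i ∈ Finset.Ico 1 j, (lam i : ℤ) * lam j) -
        ∑ j ∈ Finset.range k, (j : ℤ) * lam j ≥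
      ∑ j ∈ Finset.Ico 1 k, (j : ℤ) * lam j * ((lam j : ℤ) - 1)) ∧
    (0 ≤ ∑ j ∈ Finset.Ico 1 k, (j : ℤ) * lam j * ((lam j : ℤ) - 1)) ∧
    (0 ≤ (k : ℝ) * ((k : ℝ) - 1) / 2 +
        (∑ j ∈ Finset.range k, ((lam j : ℝ) * ((lam j : ℝ) - 1) / 2 - (j : ℝ) * lam j)) -
        (k : ℝ) * ((lam 0 : ℝ) - 1)) :=
  stmt6_general k lam hanti hsum
end

section
/- Let V be a finite-dimensional real inner product space and let v_1, …, v_m ∈ V. For nonnegative reals γ_1, …, γ_m with ∑_i γ_i > 0, the symmetric operator ∑_{i=1}^m γ_i v_i v_i^T − ∑_{1≤i<j≤m} (γ_i γ_j / ∑_k γ_k)(v_i − v_j)(v_i − v_j)^T equals (1/∑_k γ_k)(∑_i γ_i v_i)(∑_j γ_j v_j)^T, and in particular is positive semidefinite. -/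
open BigOperators RealInnerProductSpace

variable {V : Type*} [NormedAddCommGroup V] [InnerProductSpace ℝ V]

/-- The rank-one operator `v vᵀ : x ↦ ⟪v, x⟫ • v`. -/
noncomputable def outer (v : V) : V →ₗ[ℝ] V where
  toFun x := ⟪v, x⟫ • v
  map_add' x y := by simp [inner_add_right, add_smul]
  map_smul' c x := by simp [inner_smul_right, smul_smul]

lemma outer_apply (v x : V) : outer v x = ⟪v, x⟫ • v := rfl

lemma aux_pair {M : Type*} [AddCommGroup M] (m : ℕ) (g : Fin m → Fin m → M)
    (hsymm : ∀ i j, g i j = g j i) (hdiag : ∀ i, g i i = 0) :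
    ((∑ i, ∑ j, if i < j then g i j else 0) + (∑ i, ∑ j, if i < j then g i j else 0) : M)
      = ∑ i, ∑ j, g i j := by
  have h2 : (∑ i, ∑ j, if i < j then g i j else 0)
      = ∑ i : Fin m, ∑ j : Fin m, if j < i then g i j else 0 := by
    rw [Finset.sum_comm]
    exact Finset.sum_congr rfl fun i _ => Finset.sum_congr rfl fun j _ => by rw [hsymm]
  nth_rewrite 2 [h2]
  rw [← Finset.sum_add_distrib]
  refine Finset.sum_congr rfl fun i _ => ?_
  rw [← Finset.sum_add_distrib]
  refine Finset.sum_congr rfl fun j _ => ?_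
  rcases lt_trichotomy i j with h|h|h
  · rw [if_pos h, if_neg (asymm h), add_zero]
  · subst h; simp [hdiag]
  · rw [if_neg (asymm h), if_pos h, zero_add]

lemma aux_expand (m : ℕ) (v : Fin m → V) (γ : Fin m → ℝ) (x : V) :
    (∑ i, ∑ j, (γ i * γ j) • (⟪v i - v j, x⟫ • (v i - v j)))
      = ((∑ k, γ k) • ∑ i, γ i • (⟪v i, x⟫ • v i) - ⟪∑ i, γ i • v i, x⟫ • ∑ i, γ i • v i)
        + ((∑ k, γ k) • ∑ i, γ i • (⟪v i, x⟫ • v i) - ⟪∑ i, γ i • v i, x⟫ • ∑ i, γ i • v i) := by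
  simp only [inner_sub_left, sub_smul, smul_sub, smul_smul, sum_inner, real_inner_smul_left,
    Finset.smul_sum, Finset.sum_smul, Finset.sum_sub_distrib]
  rw [Finset.sum_comm (f := fun i j => ((γ i * γ j) * ⟪v j, x⟫) • v j)]
  rw [Finset.sum_comm (f := fun i j => ((γ i * γ j) * ⟪v i, x⟫) • v j)]
  have hA : ∀ i : Fin m, (∑ j, (γ i * γ j * ⟪v i, x⟫) • v i)
      = ((∑ k, γ k) * (γ i * ⟪v i, x⟫)) • v i := by
    intro i
    rw [← Finset.sum_smul]
    congr 1
    rw [show (∑ j, γ i * γ j * ⟪v i, x⟫) = ∑ j, (γ i * ⟪v i, x⟫) * γ j from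
      Finset.sum_congr rfl fun j _ => by ring, ← Finset.mul_sum]
    ring
  have hB : ∀ i : Fin m, (∑ j, (γ i * γ j * ⟪v j, x⟫) • v i)
      = ((∑ j, γ j * ⟪v j, x⟫) * γ i) • v i := by
    intro i
    rw [← Finset.sum_smul]
    congr 1
    rw [show (∑ j, γ i * γ j * ⟪v j, x⟫) = ∑ j, (γ j * ⟪v j, x⟫) * γ i from
      Finset.sum_congr rfl fun j _ => by ring, ← Finset.sum_mul]
  have hC : ∀ i : Fin m, (∑ j, (γ j * γ i * ⟪v j, x⟫) • v i)
      = ((∑ j, γ j * ⟪v j, x⟫) * γ i) • v i := by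
    intro i
    rw [← Finset.sum_smul]
    congr 1
    rw [show (∑ j, γ j * γ i * ⟪v j, x⟫) = ∑ j, (γ j * ⟪v j, x⟫) * γ i from
      Finset.sum_congr rfl fun j _ => by ring, ← Finset.sum_mul]
  have hD : ∀ i : Fin m, (∑ j, (γ j * γ i * ⟪v i, x⟫) • v i)
      = ((∑ k, γ k) * (γ i * ⟪v i, x⟫)) • v i := by
    intro i
    rw [← Finset.sum_smul]
    congr 1
    rw [show (∑ j, γ j * γ i * ⟪v i, x⟫) = ∑ j, (γ i * ⟪v i, x⟫) * γ j from
      Finset.sum_congr rfl fun j _ => by ring, ← Finset.mul_sum]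
    ring
  rw [Finset.sum_congr rfl fun i _ => hA i, Finset.sum_congr rfl fun i _ => hB i,
    Finset.sum_congr rfl fun i _ => hC i, Finset.sum_congr rfl fun i _ => hD i]
  abel

theorem stmt10 [FiniteDimensional ℝ V] (m : ℕ) (v : Fin m → V) (γ : Fin m → ℝ)
    (hγ : ∀ i, 0 ≤ γ i) (hpos : 0 < ∑ i, γ i) :
    ((∑ i, γ i • outer (v i)) -
        ∑ i : Fin m, ∑ j : Fin m, if i < j then
          (γ i * γ j / ∑ k, γ k) • outer (v i - v j) else 0) =
      (1 / ∑ k, γ k) • outer (∑ i, γ i • v i) ∧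
    ∀ x : V, 0 ≤ ⟪x, ((∑ i, γ i • outer (v i)) -
        ∑ i : Fin m, ∑ j : Fin m, if i < j then
          (γ i * γ j / ∑ k, γ k) • outer (v i - v j) else 0) x⟫ := by
  have hS : (∑ k, γ k) ≠ 0 := ne_of_gt hpos
  have heq : ((∑ i, γ i • outer (v i)) -
        ∑ i : Fin m, ∑ j : Fin m, if i < j then
          (γ i * γ j / ∑ k, γ k) • outer (v i - v j) else 0) =
      (1 / ∑ k, γ k) • outer (∑ i, γ i • v i) := by
    apply LinearMap.ext
    intro x
    simp only [LinearMap.sub_apply, LinearMap.coe_sum, Finset.sum_apply,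
      LinearMap.smul_apply, outer_apply, apply_ite (fun (f : V →ₗ[ℝ] V) => f x),
      LinearMap.zero_apply]
    have hcoef : ∀ i j : Fin m,
        (if i < j then (γ i * γ j / ∑ k, γ k) • (⟪v i - v j, x⟫ • (v i - v j)) else 0)
          = (1 / ∑ k, γ k) • (if i < j then (γ i * γ j) • (⟪v i - v j, x⟫ • (v i - v j)) else 0) := by
      intro i j
      rcases lt_or_ge i j with h|h
      · rw [if_pos h, if_pos h, smul_smul, smul_smul, smul_smul]
        congr 1
        field_simp
      · rw [if_neg (not_lt.2 h), if_neg (not_lt.2 h), smul_zero]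
    simp only [hcoef, ← Finset.smul_sum]
    have hpair := aux_pair m (fun i j => (γ i * γ j) • (⟪v i - v j, x⟫ • (v i - v j)))
      (fun i j => by
        rw [show v i - v j = -(v j - v i) by abel]
        simp only [inner_neg_left, neg_smul, smul_neg, neg_neg]
        rw [mul_comm])
      (fun i => by simp)
    rw [aux_expand m v γ x] at hpair
    have hX : (∑ i : Fin m, ∑ j : Fin m, if i < j then
          (γ i * γ j) • (⟪v i - v j, x⟫ • (v i - v j)) else 0)
        = (∑ k, γ k) • (∑ i, γ i • (⟪v i, x⟫ • v i))
            - ⟪∑ i, γ i • v i, x⟫ • ∑ i, γ i • v i := by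
      have h2 : (2 : ℝ) • (∑ i : Fin m, ∑ j : Fin m, if i < j then
            (γ i * γ j) • (⟪v i - v j, x⟫ • (v i - v j)) else 0)
          = (2 : ℝ) • ((∑ k, γ k) • (∑ i, γ i • (⟪v i, x⟫ • v i))
              - ⟪∑ i, γ i • v i, x⟫ • ∑ i, γ i • v i) := by
        rw [two_smul, two_smul]
        exact hpair
      exact smul_right_injective V two_ne_zero h2
    rw [hX, smul_sub, smul_smul, one_div, inv_mul_cancel₀ hS, one_smul]
    abel
  refine ⟨heq, fun x => ?_⟩
  rw [heq]
  rw [LinearMap.smul_apply, outer_apply, real_inner_smul_right, real_inner_smul_right,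
    real_inner_comm x]
  exact mul_nonneg (by positivity) (mul_self_nonneg _)
end
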